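/- arXiv:1711.09341 — 2 statements merged into one kernel-verified Lean document; each statement's English description precedes it below -/
import Mathlib

section
/- Let f be a circuit injection from a 3-connected graph G onto G', and suppose for some vertex w of G' there exist edges e₁, e₂ of G sharing a vertex v with f(e₁) and f(e₂) both incident to w. Then f(S(v)) = S(w), i.e., f maps the star of v exactly onto the star of w. -/
/-!
Say `e₁, e₂` meet at `x` and `f e₁, f e₂` meet at `w`. In a 3-connected graph, two edges at `x`
and any further edge lie on a common cycle: deleting all other edges at `x` leaves a 2-connected
graph, and there every vertex and every edge share a cycle. A vertex of a cycle meets exactly two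
of its edges, so an edge `d` avoiding `x` cannot have `f d` at `w`: the image of a cycle through
`e₁, e₂, d` would meet `w` three times. Conversely, for `d` at `x`, the image of a cycle through
`e₂` and `d` has a second edge at `w`; its preimage lies at `x` by the first step, so it is `d`.
-/

open SimpleGraph

universe u v

/-- A circuit of `G` is the edge set of a cycle of `G`. -/
def IsCircuit {V : Type u} (G : SimpleGraph V) (C : Set (Sym2 V)) : Prop :=
  ∃ (x : V) (w : G.Walk x x), w.IsCycle ∧ C = {e | e ∈ w.edges}

/-- The set of vertices covered by a set of edges. -/
def circVerts {V : Type u} (C : Set (Sym2 V)) : Set V :=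
  {x | ∃ e ∈ C, x ∈ e}

/-- A set of edges is independent if its edges are pairwise nonadjacent. -/
def IndepEdges {V : Type u} (A : Set (Sym2 V)) : Prop :=
  ∀ e₁ ∈ A, ∀ e₂ ∈ A, e₁ ≠ e₂ → ∀ x : V, x ∈ e₁ → x ∉ e₂

/-- 2-connected: connected, at least 3 vertices, and deleting any one vertex
leaves the graph connected. -/
def TwoConnected {V : Type u} (G : SimpleGraph V) : Prop :=
  G.Connected ∧ (3 : Cardinal) ≤ Cardinal.mk V ∧
    ∀ x : V, (G.induce {x}ᶜ).Connected

/-- 3-connected: at least 4 vertices and deleting any two vertices leaves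
the graph connected. -/
def ThreeConnected {V : Type u} (G : SimpleGraph V) : Prop :=
  (4 : Cardinal) ≤ Cardinal.mk V ∧
    ∀ x y : V, (G.induce ({x, y} : Set V)ᶜ).Connected

/-- k-connected: more than k vertices and deleting any set of fewer than k
vertices leaves the graph connected. -/
def KConnected {V : Type u} (k : ℕ) (G : SimpleGraph V) : Prop :=
  (k : Cardinal) < Cardinal.mk V ∧
    ∀ s : Set V, s.Finite → Nat.card s < k → (G.induce sᶜ).Connected

/-- The image of a set of edges of `G` under an edge map `f`. -/
def mapEdges {V : Type u} {V' : Type v} (G : SimpleGraph V) (G' : SimpleGraph V')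
    (f : G.edgeSet → G'.edgeSet) (C : Set (Sym2 V)) : Set (Sym2 V') :=
  {e' | ∃ e : G.edgeSet, (e : Sym2 V) ∈ C ∧ (f e : Sym2 V') = e'}

/-- The preimage of a set of edges of `G'` under an edge map `f`. -/
def preimEdges {V : Type u} {V' : Type v} (G : SimpleGraph V) (G' : SimpleGraph V')
    (f : G.edgeSet → G'.edgeSet) (S : Set (Sym2 V')) : Set (Sym2 V) :=
  {e | ∃ he : e ∈ G.edgeSet, (f ⟨e, he⟩ : Sym2 V') ∈ S}

/-- A circuit injection from `G` onto `G'`: an injective, surjective map on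
edges carrying every circuit of `G` to a circuit of `G'`, where `G'` has no
isolated vertices. -/
def IsCircuitInjection {V : Type u} {V' : Type v} (G : SimpleGraph V) (G' : SimpleGraph V')
    (f : G.edgeSet → G'.edgeSet) : Prop :=
  Function.Injective f ∧ Function.Surjective f ∧
    (∀ C : Set (Sym2 V), IsCircuit G C → IsCircuit G' (mapEdges G G' f C)) ∧
    ∀ x : V', ∃ y : V', G'.Adj x y

/-- `G` contains a subgraph of type X with connectors `e₁`, `e₂`, `e₃`:
two vertex-disjoint circuits `CA`, `CB`, edges `e₁ = (a₁,b₁)`, `e₂ = (a₂,b₂)`,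
and a path from `a₃` to `b₃` internally disjoint from both circuits, with
`a₁,a₂,a₃` distinct on `CA` and `b₁,b₂,b₃` distinct on `CB`, and `e₃` an edge
of the path. -/
def IsTypeXWith {V : Type u} (G : SimpleGraph V) (e₁ e₂ e₃ : Sym2 V) : Prop :=
  ∃ (a₁ a₂ a₃ b₁ b₂ b₃ : V) (CA CB : Set (Sym2 V)) (P : G.Walk a₃ b₃),
    IsCircuit G CA ∧ IsCircuit G CB ∧
    Disjoint (circVerts CA) (circVerts CB) ∧
    a₁ ∈ circVerts CA ∧ a₂ ∈ circVerts CA ∧ a₃ ∈ circVerts CA ∧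
    b₁ ∈ circVerts CB ∧ b₂ ∈ circVerts CB ∧ b₃ ∈ circVerts CB ∧
    a₁ ≠ a₂ ∧ a₁ ≠ a₃ ∧ a₂ ≠ a₃ ∧ b₁ ≠ b₂ ∧ b₁ ≠ b₃ ∧ b₂ ≠ b₃ ∧
    G.Adj a₁ b₁ ∧ G.Adj a₂ b₂ ∧ e₁ = s(a₁, b₁) ∧ e₂ = s(a₂, b₂) ∧
    P.IsPath ∧
    (∀ x ∈ P.support, x ≠ a₃ → x ≠ b₃ → x ∉ circVerts CA ∪ circVerts CB) ∧
    e₃ ∈ P.edges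

/-- `G` is (all of) a graph of type X with connectors `e₁`, `e₂`, `e₃`. -/
def IsTypeXGraph {V : Type u} (G : SimpleGraph V) (e₁ e₂ e₃ : Sym2 V) : Prop :=
  ∃ (a₁ a₂ a₃ b₁ b₂ b₃ : V) (CA CB : Set (Sym2 V)) (P : G.Walk a₃ b₃),
    IsCircuit G CA ∧ IsCircuit G CB ∧
    Disjoint (circVerts CA) (circVerts CB) ∧
    a₁ ∈ circVerts CA ∧ a₂ ∈ circVerts CA ∧ a₃ ∈ circVerts CA ∧
    b₁ ∈ circVerts CB ∧ b₂ ∈ circVerts CB ∧ b₃ ∈ circVerts CB ∧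
    a₁ ≠ a₂ ∧ a₁ ≠ a₃ ∧ a₂ ≠ a₃ ∧ b₁ ≠ b₂ ∧ b₁ ≠ b₃ ∧ b₂ ≠ b₃ ∧
    G.Adj a₁ b₁ ∧ G.Adj a₂ b₂ ∧ e₁ = s(a₁, b₁) ∧ e₂ = s(a₂, b₂) ∧
    P.IsPath ∧
    (∀ x ∈ P.support, x ≠ a₃ → x ≠ b₃ → x ∉ circVerts CA ∪ circVerts CB) ∧
    e₃ ∈ P.edges ∧
    G.edgeSet = CA ∪ CB ∪ {e₁, e₂} ∪ {e | e ∈ P.edges}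

namespace SimpleGraph.Walk

variable {V : Type u} {G : SimpleGraph V}

theorem IsCycle.exists_edgeSet_inter_incidenceSet_eq_pair {c v : V} {C : G.Walk c c}
    (hC : C.IsCycle) (hv : v ∈ C.support) :
    ∃ g₁ g₂, g₁ ≠ g₂ ∧ C.edgeSet ∩ G.incidenceSet v = {g₁, g₂} := by
  obtain ⟨y₁, y₂, hne, hy⟩ := Set.ncard_eq_two.mp (hC.ncard_neighborSet_toSubgraph_eq_two hv)
  have hmem : ∀ y, s(v, y) ∈ C.edges ↔ y = y₁ ∨ y = y₂ := fun y => by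
    rw [← adj_toSubgraph_iff_mem_edges, ← Subgraph.mem_neighborSet, hy]; rfl
  refine ⟨s(v, y₁), s(v, y₂), fun h => hne (Sym2.congr_right.mp h), Set.ext fun g => ?_⟩
  constructor
  · rintro ⟨hgC, -, hvg⟩
    obtain ⟨y, rfl⟩ := Sym2.mem_iff_exists.mp hvg
    rcases (hmem y).mp hgC with rfl | rfl <;> simp
  · have key : ∀ y, y = y₁ ∨ y = y₂ → s(v, y) ∈ C.edgeSet ∩ G.incidenceSet v := fun y hy' =>
      ⟨(hmem y).mpr hy', C.edges_subset_edgeSet ((hmem y).mpr hy'), Sym2.mem_mk_left v y⟩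
    rintro (rfl | rfl)
    exacts [key _ (Or.inl rfl), key _ (Or.inr rfl)]

theorem IsCycle.eq_or_eq_of_mem_edges {c v : V} {C : G.Walk c c} (hC : C.IsCycle)
    {g₁ g₂ g : Sym2 V} (h₁ : g₁ ∈ C.edges) (h₂ : g₂ ∈ C.edges) (h : g ∈ C.edges)
    (hv₁ : v ∈ g₁) (hv₂ : v ∈ g₂) (hv : v ∈ g) (hne : g₁ ≠ g₂) : g = g₁ ∨ g = g₂ := by
  obtain ⟨a, b, -, hab⟩ :=
    hC.exists_edgeSet_inter_incidenceSet_eq_pair (C.mem_support_of_mem_edges h hv)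
  have hpair : ∀ g', g' ∈ C.edges → v ∈ g' → g' = a ∨ g' = b := fun g' hg' hvg' => by
    have : g' ∈ C.edgeSet ∩ G.incidenceSet v := ⟨hg', C.edges_subset_edgeSet hg', hvg'⟩
    rwa [hab] at this
  rcases hpair g h hv with rfl | rfl <;> rcases hpair g₁ h₁ hv₁ with rfl | rfl <;>
    rcases hpair g₂ h₂ hv₂ with rfl | rfl <;> simp_all

theorem IsCycle.exists_mem_edges_ne {c v : V} {C : G.Walk c c} (hC : C.IsCycle)
    {g : Sym2 V} (hg : g ∈ C.edges) (hv : v ∈ g) : ∃ g' ∈ C.edges, v ∈ g' ∧ g' ≠ g := by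
  obtain ⟨a, b, hne, hab⟩ :=
    hC.exists_edgeSet_inter_incidenceSet_eq_pair (C.mem_support_of_mem_edges hg hv)
  have ha : a ∈ C.edgeSet ∩ G.incidenceSet v := hab ▸ Or.inl rfl
  have hb : b ∈ C.edgeSet ∩ G.incidenceSet v := hab ▸ Or.inr rfl
  by_cases hag : a = g
  · exact ⟨b, hb.1, hb.2.2, fun h => hne (hag.trans h.symm)⟩
  · exact ⟨a, ha.1, ha.2.2, hag⟩

theorem exists_isPath_to_first_mem {S : Set V} {a b : V} (W : G.Walk a b) (ha : a ∉ S)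
    (hb : b ∈ S) : ∃ p ∈ S, ∃ P : G.Walk a p, P.IsPath ∧
      (∀ y ∈ P.support, y ≠ p → y ∉ S) ∧ P.support ⊆ W.support := by
  classical
  suffices ∃ p ∈ S, ∃ P : G.Walk a p, (∀ y ∈ P.support, y ≠ p → y ∉ S) ∧ P.support ⊆ W.support by
    obtain ⟨p, hp, P, hPS, hPW⟩ := this
    exact ⟨p, hp, P.bypass, P.bypass_isPath, fun y hy => hPS y (P.support_bypass_subset_support hy),
      List.Subset.trans P.support_bypass_subset_support hPW⟩
  induction W with
  | nil => exact absurd hb ha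
  | @cons a c b hac W ih =>
    by_cases hc : c ∈ S
    · exact ⟨c, hc, hac.toWalk, by simp [ha], by simp⟩
    · obtain ⟨p, hp, P, hPS, hPW⟩ := ih hc hb
      refine ⟨p, hp, cons hac P, fun y hy hyp => ?_, List.cons_subset_cons _ hPW⟩
      rcases List.mem_cons.mp hy with rfl | hy
      exacts [ha, hPS y hy hyp]

theorem IsCycle.exists_isPath_mem_edges {c p q : V} {C : G.Walk c c} (hC : C.IsCycle)
    (hp : p ∈ C.support) (hq : q ∈ C.support) (hpq : p ≠ q) {e : Sym2 V} (he : e ∈ C.edges) :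
    ∃ P : G.Walk p q, P.IsPath ∧ e ∈ P.edges ∧ ∀ y ∈ P.support, y ∈ C.support := by
  classical
  set R := C.rotate p hp
  have hR : R.IsCycle := hC.rotate hp
  have hqR : q ∈ R.support := (C.mem_support_rotate_iff p hp).mpr hq
  have hsplit := R.take_spec hqR
  have heR : e ∈ (R.takeUntil q hqR).edges ++ (R.dropUntil q hqR).edges := by
    rw [← edges_append, hsplit]; exact (C.rotate_edges p hp).perm.mem_iff.mpr he
  have hsub : ∀ y ∈ R.support, y ∈ C.support := fun y => (C.mem_support_rotate_iff p hp).mp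
  rcases List.mem_append.mp heR with he' | he'
  · exact ⟨_, hR.isPath_takeUntil hqR, he',
      fun y hy => hsub y (R.support_takeUntil_subset_support hqR hy)⟩
  · have hdrop : (R.dropUntil q hqR).IsPath :=
      (hsplit ▸ hR).isPath_of_append_right (not_nil_of_ne hpq)
    refine ⟨_, hdrop.reverse, by rwa [edges_reverse, List.mem_reverse], fun y hy => ?_⟩
    rw [support_reverse, List.mem_reverse] at hy
    exact hsub y (R.support_dropUntil_subset_support hqR hy)

theorem exists_deleteEdges_support_eq {x a b : V} (W : G.Walk a b) (hx : x ∉ W.support)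
    {S : Set (Sym2 V)} (hS : ∀ g ∈ S, x ∈ g) :
    ∃ W' : (G.deleteEdges S).Walk a b, W'.support = W.support :=
  ⟨W.toDeleteEdges S fun _ hg hgS => hx (W.mem_support_of_mem_edges hg (hS _ hgS)),
    support_transfer _ _⟩

/-- The new cycle runs `a' → a`, then along `W` to its first vertex `p` on `C`, then back to `a'`
along the arc of `C` through `e`. -/
theorem IsCycle.exists_isCycle_mem_edges_mem_support {c a a' t : V} {C : G.Walk c c}
    (hC : C.IsCycle) {e : Sym2 V} (he : e ∈ C.edges) (ha' : a' ∈ C.support) (ha : a ∉ C.support)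
    (hadj : G.Adj a a') (ht : t ∈ C.support) (W : G.Walk a t) (hW : a' ∉ W.support) :
    ∃ (c' : V) (C' : G.Walk c' c'), C'.IsCycle ∧ e ∈ C'.edges ∧ a ∈ C'.support := by
  obtain ⟨p, hpC, P, hP, hPC, hPW⟩ := W.exists_isPath_to_first_mem (S := {y | y ∈ C.support}) ha ht
  have ha'P : a' ∉ P.support := fun h => hW (hPW h)
  have hpa' : p ≠ a' := fun h => ha'P (h ▸ P.end_mem_support)
  obtain ⟨Q, hQ, heQ, hQC⟩ := hC.exists_isPath_mem_edges hpC ha' hpa' he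
  have hPlen : P.length ≠ 0 := fun h => ha (eq_of_length_eq_zero h ▸ hpC)
  have hdisj : (cons hadj.symm P).support.tail.Disjoint Q.support.tail := by
    rw [support_cons, List.tail_cons]
    intro y hyP hyQ
    have hyp : y = p := by
      by_contra hyp
      exact hPC y hyP hyp (hQC y (List.mem_of_mem_tail hyQ))
    have hQnodup := hQ.support_nodup
    rw [← Q.cons_tail_support, List.nodup_cons] at hQnodup
    exact hQnodup.1 (hyp ▸ hyQ)
  refine ⟨a', (cons hadj.symm P).append Q,
    (hP.cons ha'P).isCycle_append hQ hdisj (Or.inl (by rw [length_cons]; omega)), ?_, ?_⟩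
  · simp [heQ]
  · simp

end SimpleGraph.Walk

section Connectivity

variable {V : Type u} {G : SimpleGraph V}

theorem SimpleGraph.reachable_induce_iff_exists_walk {s : Set V} {a b : s} :
    (G.induce s).Reachable a b ↔ ∃ W : G.Walk a b, ∀ y ∈ W.support, y ∈ s := by
  constructor
  · rintro ⟨W⟩
    refine ⟨W.map (Embedding.induce s).toHom, fun y hy => ?_⟩
    obtain ⟨y', -, rfl⟩ := List.mem_map.mp ((W.support_map _).symm ▸ hy)
    exact y'.2
  · rintro ⟨W, hW⟩
    exact ⟨W.induce s hW⟩

theorem TwoConnected.exists_walk_avoiding (hG : TwoConnected G) {v a b : V} (ha : a ≠ v)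
    (hb : b ≠ v) : ∃ W : G.Walk a b, v ∉ W.support := by
  obtain ⟨W, hW⟩ := reachable_induce_iff_exists_walk.mp
    ((hG.2.2 v).preconnected ⟨a, ha⟩ ⟨b, hb⟩)
  exact ⟨W, fun h => hW v h rfl⟩

theorem TwoConnected.of_exists_walk_avoiding (h3 : (3 : Cardinal) ≤ Cardinal.mk V)
    (h : ∀ v a b : V, a ≠ v → b ≠ v → ∃ W : G.Walk a b, v ∉ W.support) : TwoConnected G := by
  obtain ⟨a₀, -⟩ := Cardinal.two_le_iff.mp (le_trans (by norm_num) h3)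
  have : Nonempty V := ⟨a₀⟩
  refine ⟨⟨fun a b => ?_⟩, h3, fun v => ?_⟩
  · obtain ⟨r, hra, hrb⟩ := Cardinal.exists_ne_ne_of_three_le h3 a b
    obtain ⟨W, -⟩ := h r a b hra.symm hrb.symm
    exact ⟨W⟩
  · obtain ⟨a, hav, -⟩ := Cardinal.exists_ne_ne_of_three_le h3 v v
    have : Nonempty ({v}ᶜ : Set V) := ⟨⟨a, hav⟩⟩
    refine ⟨fun a b => ?_⟩
    obtain ⟨W, hW⟩ := h v a b a.2 b.2
    exact reachable_induce_iff_exists_walk.mpr ⟨W, fun y hy hyv => hW (hyv ▸ hy)⟩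

theorem ThreeConnected.exists_walk_avoiding (hG : ThreeConnected G) {x y a b : V}
    (hax : a ≠ x) (hay : a ≠ y) (hbx : b ≠ x) (hby : b ≠ y) :
    ∃ W : G.Walk a b, x ∉ W.support ∧ y ∉ W.support := by
  obtain ⟨W, hW⟩ := reachable_induce_iff_exists_walk.mp
    ((hG.2 x y).preconnected ⟨a, by simp [hax, hay]⟩ ⟨b, by simp [hbx, hby]⟩)
  exact ⟨W, fun h => hW x h (by simp), fun h => hW y h (by simp)⟩

theorem TwoConnected.exists_isCycle_mem_edges (hG : TwoConnected G) {u z : V} (hadj : G.Adj u z) :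
    ∃ (c : V) (C : G.Walk c c), C.IsCycle ∧ s(u, z) ∈ C.edges := by
  refine adj_and_reachable_delete_edges_iff_exists_cycle.mp
    ⟨hadj, reachable_deleteEdges_iff_exists_walk.mpr ?_⟩
  obtain ⟨r, hru, hrz⟩ := Cardinal.exists_ne_ne_of_three_le hG.2.1 u z
  obtain ⟨W₀, huW₀⟩ := hG.exists_walk_avoiding hadj.ne' hru
  cases W₀ with
  | nil => exact absurd rfl hrz
  | @cons _ c₀ _ hzc₀ W₁ =>
    have hc₀u : c₀ ≠ u := fun h => huW₀ (List.mem_cons_of_mem _ (h ▸ W₁.start_mem_support))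
    obtain ⟨W₂, hzW₂⟩ := hG.exists_walk_avoiding hzc₀.ne' hadj.ne
    refine ⟨(Walk.cons hzc₀ W₂).reverse, ?_⟩
    rw [Walk.edges_reverse, List.mem_reverse, Walk.edges_cons, List.mem_cons, not_or]
    exact ⟨by simp [hadj.ne, hc₀u.symm], fun h => hzW₂ (W₂.snd_mem_support_of_mem_edges h)⟩

theorem TwoConnected.exists_isCycle_mem_edges_mem_support (hG : TwoConnected G) {u z : V}
    (hadj : G.Adj u z) (a : V) :
    ∃ (c : V) (C : G.Walk c c), C.IsCycle ∧ s(u, z) ∈ C.edges ∧ a ∈ C.support := by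
  obtain ⟨P⟩ := hG.1.preconnected a u
  induction P with
  | nil =>
    obtain ⟨c, C, hC, he⟩ := hG.exists_isCycle_mem_edges hadj
    exact ⟨c, C, hC, he, C.fst_mem_support_of_mem_edges he⟩
  | @cons a a' u haa' _ ih =>
    obtain ⟨c, C, hC, he, ha'⟩ := ih hadj
    by_cases ha : a ∈ C.support
    · exact ⟨c, C, hC, he, ha⟩
    obtain ⟨t, htC, hta'⟩ : ∃ t ∈ C.support, t ≠ a' := by
      by_cases hua' : u = a'
      · exact ⟨z, C.snd_mem_support_of_mem_edges he, hua' ▸ hadj.ne'⟩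
      · exact ⟨u, C.fst_mem_support_of_mem_edges he, hua'⟩
    obtain ⟨W, hW⟩ := hG.exists_walk_avoiding haa'.ne hta'
    exact hC.exists_isCycle_mem_edges_mem_support he ha' ha haa' htC W hW

section

variable {x : V} {d d' : Sym2 V}

theorem ThreeConnected.exists_walk_deleteEdges_avoiding (hG : ThreeConnected G)
    (hd : d ∈ G.edgeSet) (hd' : d' ∈ G.edgeSet) (hxd : x ∈ d) (hxd' : x ∈ d') (hne : d ≠ d')
    {v a : V} (hvx : v ≠ x) (hav : a ≠ v) :
    ∃ W : (G.deleteEdges {g | x ∈ g ∧ g ≠ d ∧ g ≠ d'}).Walk a x, v ∉ W.support := by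
  set K := G.deleteEdges {g | x ∈ g ∧ g ≠ d ∧ g ≠ d'}
  obtain ⟨p, rfl⟩ := Sym2.mem_iff_exists.mp hxd
  obtain ⟨q, rfl⟩ := Sym2.mem_iff_exists.mp hxd'
  obtain ⟨y, hyK, hyv⟩ : ∃ y, K.Adj y x ∧ y ≠ v := by
    have hK : ∀ y, s(x, y) ∈ G.edgeSet → (s(x, y) = s(x, p) ∨ s(x, y) = s(x, q)) → K.Adj y x :=
      fun y hy hyd => (K.mem_edgeSet.mp (by
        rw [edgeSet_deleteEdges]; exact ⟨hy, fun h => hyd.elim h.2.1 h.2.2⟩)).symm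
    by_cases hpv : p = v
    · exact ⟨q, hK q hd' (Or.inr rfl), fun h => hne (by rw [hpv, h])⟩
    · exact ⟨p, hK p hd (Or.inl rfl), hpv⟩
  by_cases hax : a = x
  · subst hax
    exact ⟨Walk.nil, by simpa using hvx⟩
  obtain ⟨W, hvW, hxW⟩ := hG.exists_walk_avoiding hav hax hyv hyK.ne
  obtain ⟨W', hW'⟩ := W.exists_deleteEdges_support_eq hxW (S := {g | x ∈ g ∧ g ≠ _ ∧ g ≠ _})
    fun _ hg => hg.1
  refine ⟨W'.concat hyK, ?_⟩
  rw [Walk.support_concat, List.mem_append, List.mem_singleton, hW', not_or]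
  exact ⟨hvW, hvx⟩

theorem ThreeConnected.twoConnected_deleteEdges (hG : ThreeConnected G)
    (hd : d ∈ G.edgeSet) (hd' : d' ∈ G.edgeSet) (hxd : x ∈ d) (hxd' : x ∈ d') (hne : d ≠ d') :
    TwoConnected (G.deleteEdges {g | x ∈ g ∧ g ≠ d ∧ g ≠ d'}) := by
  refine TwoConnected.of_exists_walk_avoiding (le_trans (by norm_num) hG.1) fun v a b hav hbv => ?_
  by_cases hvx : v = x
  · subst hvx
    obtain ⟨W, hvW, -⟩ := hG.exists_walk_avoiding hav hav hbv hbv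
    obtain ⟨W', hW'⟩ := W.exists_deleteEdges_support_eq hvW (S := {g | v ∈ g ∧ g ≠ d ∧ g ≠ d'})
      fun _ hg => hg.1
    exact ⟨W', hW' ▸ hvW⟩
  obtain ⟨Wa, hWa⟩ := hG.exists_walk_deleteEdges_avoiding hd hd' hxd hxd' hne hvx hav
  obtain ⟨Wb, hWb⟩ := hG.exists_walk_deleteEdges_avoiding hd hd' hxd hxd' hne hvx hbv
  refine ⟨Wa.append Wb.reverse, ?_⟩
  rw [Walk.mem_support_append_iff, Walk.support_reverse, List.mem_reverse]
  exact not_or.mpr ⟨hWa, hWb⟩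

theorem ThreeConnected.exists_isCycle_mem_edges (hG : ThreeConnected G)
    (hd : d ∈ G.edgeSet) (hd' : d' ∈ G.edgeSet) (hxd : x ∈ d) (hxd' : x ∈ d') (hne : d ≠ d')
    {e : Sym2 V} (he : e ∈ G.edgeSet) (hxe : x ∉ e ∨ e = d) :
    ∃ (c : V) (C : G.Walk c c), C.IsCycle ∧ d ∈ C.edges ∧ d' ∈ C.edges ∧ e ∈ C.edges := by
  set K := G.deleteEdges {g | x ∈ g ∧ g ≠ d ∧ g ≠ d'} with hKdef
  have hK := hG.twoConnected_deleteEdges hd hd' hxd hxd' hne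
  have heK : e ∈ K.edgeSet := by
    rw [edgeSet_deleteEdges]; exact ⟨he, fun h => hxe.elim (· h.1) (h.2.1 ·)⟩
  induction e using Sym2.ind with | _ u z => ?_
  obtain ⟨c, C, hC, heC, hxC⟩ := hK.exists_isCycle_mem_edges_mem_support heK x
  obtain ⟨g₁, g₂, hg₁₂, hpair⟩ := hC.exists_edgeSet_inter_incidenceSet_eq_pair hxC
  have hKx : ∀ g ∈ C.edgeSet ∩ K.incidenceSet x, g = d ∨ g = d' := by
    rintro g ⟨-, hgK, hxg⟩
    rw [hKdef, edgeSet_deleteEdges] at hgK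
    by_contra! h
    exact hgK.2 ⟨hxg, h⟩
  have hg₁ : g₁ ∈ C.edgeSet ∩ K.incidenceSet x := hpair ▸ Or.inl rfl
  have hg₂ : g₂ ∈ C.edgeSet ∩ K.incidenceSet x := hpair ▸ Or.inr rfl
  have hdd' : d ∈ C.edges ∧ d' ∈ C.edges := by
    rcases hKx g₁ hg₁ with rfl | rfl <;> rcases hKx g₂ hg₂ with rfl | rfl
    exacts [absurd rfl hg₁₂, ⟨hg₁.1, hg₂.1⟩, ⟨hg₂.1, hg₁.1⟩, absurd rfl hg₁₂]
  refine ⟨c, C.mapLe (G.deleteEdges_le _), hC.mapLe _, ?_⟩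
  simp only [Walk.edges_mapLe_eq_edges]
  exact ⟨hdd'.1, hdd'.2, heC⟩

end

end Connectivity

namespace IsCircuitInjection

variable {V : Type u} {V' : Type v} {G : SimpleGraph V} {G' : SimpleGraph V'}
  {f : G.edgeSet → G'.edgeSet}

theorem exists_isCycle_edges_iff (hf : IsCircuitInjection G G' f) {c : V} {C : G.Walk c c}
    (hC : C.IsCycle) : ∃ (c' : V') (C' : G'.Walk c' c'), C'.IsCycle ∧
      ∀ g', g' ∈ C'.edges ↔ ∃ d : G.edgeSet, (d : Sym2 V) ∈ C.edges ∧ (f d : Sym2 V') = g' := by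
  obtain ⟨c', C', hC', heq⟩ := hf.2.2.1 _ ⟨c, C, hC, rfl⟩
  exact ⟨c', C', hC', fun g' => (Set.ext_iff.mp heq g').symm⟩

theorem mem_of_mem_apply (hG : ThreeConnected G) (hf : IsCircuitInjection G G' f) {x : V}
    {w : V'} {e₁ e₂ : G.edgeSet} (hne : e₁ ≠ e₂) (hx₁ : x ∈ (e₁ : Sym2 V))
    (hx₂ : x ∈ (e₂ : Sym2 V)) (hw₁ : w ∈ (f e₁ : Sym2 V')) (hw₂ : w ∈ (f e₂ : Sym2 V'))
    {d : G.edgeSet} (hwd : w ∈ (f d : Sym2 V')) : x ∈ (d : Sym2 V) := by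
  by_contra hxd
  obtain ⟨c, C, hC, h₁, h₂, hd⟩ := hG.exists_isCycle_mem_edges e₁.2 e₂.2 hx₁ hx₂
    (Subtype.coe_ne_coe.mpr hne) d.2 (Or.inl hxd)
  obtain ⟨c', C', hC', hC'f⟩ := hf.exists_isCycle_edges_iff hC
  have hfC : ∀ g : G.edgeSet, (g : Sym2 V) ∈ C.edges → (f g : Sym2 V') ∈ C'.edges :=
    fun g hg => (hC'f _).mpr ⟨g, hg, rfl⟩
  have hf_ne : (f e₁ : Sym2 V') ≠ f e₂ := fun h => hne (hf.1 (Subtype.ext h))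
  rcases hC'.eq_or_eq_of_mem_edges (hfC e₁ h₁) (hfC e₂ h₂) (hfC d hd) hw₁ hw₂ hwd hf_ne with
    h | h <;> rw [hf.1 (Subtype.ext h)] at hxd
  exacts [hxd hx₁, hxd hx₂]

theorem mem_apply_of_mem (hG : ThreeConnected G) (hf : IsCircuitInjection G G' f) {x : V}
    {w : V'} {e : G.edgeSet} (hx : x ∈ (e : Sym2 V)) (hw : w ∈ (f e : Sym2 V'))
    (hstar : ∀ d : G.edgeSet, w ∈ (f d : Sym2 V') → x ∈ (d : Sym2 V))
    {d : G.edgeSet} (hxd : x ∈ (d : Sym2 V)) : w ∈ (f d : Sym2 V') := by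
  by_cases hde : d = e
  · exact hde ▸ hw
  have hde' : (e : Sym2 V) ≠ d := Subtype.coe_ne_coe.mpr (Ne.symm hde)
  obtain ⟨c, C, hC, he, hd, -⟩ := hG.exists_isCycle_mem_edges e.2 d.2 hx hxd hde' e.2 (Or.inr rfl)
  obtain ⟨c', C', hC', hC'f⟩ := hf.exists_isCycle_edges_iff hC
  obtain ⟨g', hg', hwg', hg'e⟩ := hC'.exists_mem_edges_ne ((hC'f _).mpr ⟨e, he, rfl⟩) hw
  obtain ⟨b, hb, rfl⟩ := (hC'f g').mp hg'
  rcases hC.eq_or_eq_of_mem_edges he hd hb hx hxd (hstar b hwg') hde' with h | h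
  · exact absurd (by rw [Subtype.ext h]) hg'e
  · rwa [← Subtype.ext h]

end IsCircuitInjection

/-- If two edges of `G` at a vertex `v` have images incident at
a vertex `w`, then `f` maps the star of `v` exactly onto the star of `w`. -/
theorem statement14 {V : Type u} {V' : Type v} (G : SimpleGraph V) (G' : SimpleGraph V')
    (h3 : ThreeConnected G) (f : G.edgeSet → G'.edgeSet)
    (hf : IsCircuitInjection G G' f) (w : V') (x : V)
    (e₁ e₂ : G.edgeSet) (hne : e₁ ≠ e₂)
    (hx₁ : x ∈ (e₁ : Sym2 V)) (hx₂ : x ∈ (e₂ : Sym2 V))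
    (hw₁ : w ∈ (f e₁ : Sym2 V')) (hw₂ : w ∈ (f e₂ : Sym2 V')) :
    mapEdges G G' f (G.incidenceSet x) = G'.incidenceSet w := by
  have hstar : ∀ d : G.edgeSet, w ∈ (f d : Sym2 V') → x ∈ (d : Sym2 V) :=
    fun _ => hf.mem_of_mem_apply h3 hne hx₁ hx₂ hw₁ hw₂
  ext g'
  constructor
  · rintro ⟨d, ⟨-, hxd⟩, rfl⟩
    exact ⟨(f d).2, hf.mem_apply_of_mem h3 hx₂ hw₂ hstar hxd⟩
  · rintro ⟨hg', hwg'⟩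
    obtain ⟨d, hd⟩ := hf.2.1 ⟨g', hg'⟩
    exact ⟨d, ⟨d.2, hstar d (hd ▸ hwg')⟩, by rw [hd]⟩
end

section
/- Let G be 2-connected and let A be a set of independent edges such that every circuit of G contains either 0 or exactly 2 edges of A, and G − A is disconnected. Then G − A has exactly two connected components. -/
/-!
Since `G` is connected and `G − A` is not, some edge `pq` lies in `A`. Its ends lie in different
components of `G − A`: a `q`–`p` path in `G − A` closes up with `pq` to a circuit meeting `A`
exactly once. In a 2-connected graph every vertex `u` lies on a circuit through `pq` (extend
circuits by ears along a walk from `p` to `u`). That circuit meets `A` in at most two edges, so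
its vertices lie in at most two components of `G − A`, which must be those of `p` and `q`.
-/

open SimpleGraph

universe u v

theorem List.Nodup.ncard_setOf_mem_inter {α : Type*} {l : List α} (hl : l.Nodup) (A : Set α)
    [DecidablePred (· ∈ A)] : ({x | x ∈ l} ∩ A).ncard = l.countP (· ∈ A) := by
  classical
  have : {x | x ∈ l} ∩ A = ↑(l.filter (· ∈ A)).toFinset := by
    ext
    simp
  rw [this, Set.ncard_coe_finset, List.toFinset_card_of_nodup (hl.filter _),
    List.countP_eq_length_filter]

namespace SimpleGraph

variable {V : Type*} {G : SimpleGraph V} {A : Set (Sym2 V)}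

namespace Walk

theorem IsPath.append {u v w : V} {p : G.Walk u v} {q : G.Walk v w} (hp : p.IsPath)
    (hq : q.IsPath) (h : ∀ x ∈ p.support, x ∈ q.support → x = v) : (p.append q).IsPath := by
  rw [isPath_def, support_append]
  refine hp.support_nodup.append hq.support_nodup.tail fun x hxp hxq => ?_
  obtain rfl := h x hxp (List.mem_of_mem_tail hxq)
  have := hq.support_nodup
  rw [← cons_tail_support, List.nodup_cons] at this
  exact this.1 hxq

theorem exists_walk_to_first_mem (S : Set V) {u v : V} (p : G.Walk u v) (hv : v ∈ S) :
    ∃ z ∈ S, ∃ q : G.Walk u z,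
      q.support ⊆ p.support ∧ ∀ x ∈ q.support, x ∈ S → x = z := by
  induction p with
  | nil => exact ⟨_, hv, nil, by simp, by simp⟩
  | @cons u w v h p ih =>
    by_cases hu : u ∈ S
    · exact ⟨u, hu, nil, by simp, by simp⟩
    obtain ⟨z, hz, q, hqp, hqS⟩ := ih hv
    refine ⟨z, hz, cons h q, ?_, ?_⟩
    · simpa using List.subset_cons_of_subset _ hqp
    · simp only [support_cons, List.mem_cons, forall_eq_or_imp]
      exact ⟨fun h => absurd h hu, hqS⟩

theorem IsCycle.exists_isPath_mem_support {z x u : V} {c : G.Walk z z} (hc : c.IsCycle)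
    (hx : x ∈ c.support) (hzx : z ≠ x) (hu : u ∈ c.support) :
    ∃ r : G.Walk z x,
      r.IsPath ∧ u ∈ r.support ∧ r.support ⊆ c.support ∧ r.edges ⊆ c.edges := by
  classical
  have hspec := c.take_spec hx
  have hc' : ((c.takeUntil x hx).append (c.dropUntil x hx)).IsCycle := by rwa [hspec]
  have hdrop := hc'.isPath_of_append_right (not_nil_of_ne hzx)
  rw [← hspec, mem_support_append_iff] at hu
  rcases hu with hu | hu
  · exact ⟨_, hc.isPath_takeUntil hx, hu, c.support_takeUntil_subset_support hx,
      c.edges_takeUntil_subset_edges hx⟩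
  · refine ⟨_, hdrop.reverse, by simpa using hu, ?_, ?_⟩
    · simpa using c.support_dropUntil_subset_support hx
    · simpa using c.edges_dropUntil_subset_edges hx

theorem reachable_deleteEdges_of_mem_support {a b x : V} (w : G.Walk a b)
    (hw : ∀ e ∈ w.edges, e ∉ A) (hx : x ∈ w.support) : (G.deleteEdges A).Reachable a x := by
  classical
  exact ⟨(w.toDeleteEdges A hw).takeUntil x (by simpa using hx)⟩

variable [DecidablePred (· ∈ A)]

theorem reachable_deleteEdges_or_of_countP_le_one {a b x : V} (w : G.Walk a b)
    (hw : w.edges.countP (· ∈ A) ≤ 1) (hx : x ∈ w.support) :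
    (G.deleteEdges A).Reachable a x ∨ (G.deleteEdges A).Reachable x b := by
  induction w with
  | nil => exact .inl (by simp_all)
  | @cons a c b hac w ih =>
    rcases List.mem_cons.1 hx with rfl | hx
    · exact .inl .rfl
    by_cases hacA : s(a, c) ∈ A
    · have hw0 : ∀ e ∈ w.edges, e ∉ A := by
        simpa [hacA, List.countP_eq_zero] using hw
      exact .inr ((w.reachable_deleteEdges_of_mem_support hw0 hx).symm.trans
        (w.reachable_deleteEdges_of_mem_support hw0 w.end_mem_support))
    · have hac' : (G.deleteEdges A).Adj a c := deleteEdges_adj.2 ⟨hac, hacA⟩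
      exact (ih (by simpa [hacA] using hw) hx).imp_left hac'.reachable.trans

theorem exists_reachable_deleteEdges_of_countP_le_two {a b : V} (w : G.Walk a b)
    (hw : w.edges.countP (· ∈ A) ≤ 2) : ∃ d, ∀ x ∈ w.support,
      (G.deleteEdges A).Reachable a x ∨ (G.deleteEdges A).Reachable x b ∨
        (G.deleteEdges A).Reachable d x := by
  induction w with
  | nil => exact ⟨a, by simp_all⟩
  | @cons a c b hac w ih =>
    by_cases hacA : s(a, c) ∈ A
    · refine ⟨c, fun x hx => ?_⟩
      rcases List.mem_cons.1 hx with rfl | hx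
      · exact .inl .rfl
      rcases w.reachable_deleteEdges_or_of_countP_le_one
        (by simpa [hacA] using hw) hx with h | h
      exacts [.inr (.inr h), .inr (.inl h)]
    · have hac' : (G.deleteEdges A).Adj a c := deleteEdges_adj.2 ⟨hac, hacA⟩
      obtain ⟨d, hd⟩ := ih (by simpa [hacA] using hw)
      refine ⟨d, fun x hx => ?_⟩
      rcases List.mem_cons.1 hx with rfl | hx
      · exact .inl .rfl
      exact (hd x hx).imp_left hac'.reachable.trans

end Walk

open Walk

theorem exists_walk_not_mem_support_of_connected_induce {x a b : V}
    (h : (G.induce {x}ᶜ).Connected) (ha : a ≠ x) (hb : b ≠ x) :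
    ∃ p : G.Walk a b, x ∉ p.support := by
  have ha' : a ∈ ({x}ᶜ : Set V) := ha
  have hb' : b ∈ ({x}ᶜ : Set V) := hb
  obtain ⟨p⟩ := h.preconnected ⟨a, ha'⟩ ⟨b, hb'⟩
  refine ⟨p.map (Embedding.induce _).toHom, fun hx => ?_⟩
  replace hx : x ∈ (p.map (Embedding.induce ({x}ᶜ : Set V)).toHom).support := hx
  rw [Walk.support_map, List.mem_map] at hx
  obtain ⟨v, -, hv⟩ := hx
  exact v.2 hv

theorem reachable_deleteEdges_of_reachable_induce {x : V} {e : Sym2 V} (hx : x ∈ e)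
    {a b : ({x}ᶜ : Set V)} (h : (G.induce {x}ᶜ).Reachable a b) :
    (G.deleteEdges {e}).Reachable a b :=
  h.map (⟨Subtype.val, fun {a b} hab => deleteEdges_adj.mpr ⟨hab, by
    rintro rfl
    rcases Sym2.mem_iff.mp hx with h | h
    exacts [a.2 h.symm, b.2 h.symm]⟩⟩ : G.induce {x}ᶜ →g G.deleteEdges {e})

/-- The ear argument: a path from `y` avoiding `x` first meets `c` at some `z ≠ x`; continue
along the arc of `c` from `z` to `x` that passes through `u`, and close up with `xy`. -/
theorem exists_isCycle_mem_edges_mem_support_of_isCycle {x y u a : V}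
    (hx : (G.induce {x}ᶜ).Connected) {c : G.Walk a a} (hc : c.IsCycle)
    (hxc : x ∈ c.support) (huc : u ∈ c.support) (hux : u ≠ x) (hxy : G.Adj x y)
    (hxyc : s(x, y) ∉ c.edges) :
    ∃ (b : V) (d : G.Walk b b), d.IsCycle ∧ s(x, y) ∈ d.edges ∧ u ∈ d.support := by
  classical
  obtain ⟨p, hxp⟩ := exists_walk_not_mem_support_of_connected_induce hx hxy.ne' hux
  obtain ⟨z, hzc, q, hqp, hqc⟩ := p.exists_walk_to_first_mem {v | v ∈ c.support} huc
  have hxq : x ∉ q.bypass.support := fun h => hxp (hqp (q.support_bypass_subset_support h))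
  have hzx : z ≠ x := by
    rintro rfl
    exact hxq q.bypass.end_mem_support
  obtain ⟨r, hr, hur, hrc, hrc'⟩ := (hc.rotate hzc).exists_isPath_mem_support
    ((c.mem_support_rotate_iff z hzc).2 hxc) hzx ((c.mem_support_rotate_iff z hzc).2 huc)
  have hqr : (q.bypass.append r).IsPath := q.bypass_isPath.append hr fun v hvq hvr =>
    hqc v (q.support_bypass_subset_support hvq) ((c.mem_support_rotate_iff z hzc).1 (hrc hvr))
  refine ⟨x, cons hxy (q.bypass.append r), (cons_isCycle_iff _ hxy).2 ⟨hqr, ?_⟩, by simp,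
    by simp [hur]⟩
  rw [edges_append, List.mem_append]
  rintro (h | h)
  · exact hxq (q.bypass.fst_mem_support_of_mem_edges h)
  · exact hxyc ((c.rotate_edges z hzc).mem_iff.1 (hrc' h))

theorem Connected.exists_adj_mem_of_not_connected_deleteEdges (hG : G.Connected)
    (hA : ¬(G.deleteEdges A).Connected) : ∃ p q, G.Adj p q ∧ s(p, q) ∈ A := by
  obtain ⟨u, v, huv⟩ : ∃ u v, ¬(G.deleteEdges A).Reachable u v := by
    by_contra! h
    have := hG.nonempty
    exact hA ⟨h⟩
  obtain ⟨w⟩ := hG.preconnected u v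
  obtain ⟨e, heA, hew⟩ := w.exists_mem_edges_of_not_reachable_deleteEdges huv
  induction e using Sym2.ind with
  | _ p q => exact ⟨p, q, w.adj_of_mem_edges hew, heA⟩

theorem not_reachable_deleteEdges_of_mem [DecidablePred (· ∈ A)]
    (hA : ∀ (a : V) (c : G.Walk a a), c.IsCycle → c.edges.countP (· ∈ A) ≠ 1)
    {p q : V} (hpq : G.Adj p q) (hpqA : s(p, q) ∈ A) : ¬(G.deleteEdges A).Reachable p q := by
  intro hr
  obtain ⟨P, hP⟩ := hr.symm.exists_isPath
  set P' := P.mapLe (G.deleteEdges_le A)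
  have hP'A : ∀ e ∈ P'.edges, e ∉ A := by
    intro e he
    have := P.edges_subset_edgeSet ((edges_mapLe_eq_edges _ _).subst he)
    rw [edgeSet_deleteEdges] at this
    exact this.2
  refine hA p (cons hpq P')
    ((cons_isCycle_iff _ hpq).2 ⟨hP.mapLe _, fun h => hP'A _ h hpqA⟩) ?_
  rw [edges_cons, List.countP_cons_of_pos (by simpa using hpqA),
    List.countP_eq_zero.2 (by simpa using hP'A)]

end SimpleGraph

section

open SimpleGraph Walk

variable {V : Type*} {G : SimpleGraph V} {A : Set (Sym2 V)}

theorem TwoConnected.exists_isCycle_mem_edges_s17 (h2 : TwoConnected G) {x y : V}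
    (hxy : G.Adj x y) : ∃ (a : V) (c : G.Walk a a), c.IsCycle ∧ s(x, y) ∈ c.edges := by
  refine adj_and_reachable_delete_edges_iff_exists_cycle.mp ⟨hxy, ?_⟩
  obtain ⟨z, hzx, hzy⟩ := Cardinal.exists_ne_ne_of_three_le h2.2.1 x y
  have hxz := reachable_deleteEdges_of_reachable_induce (Sym2.mem_mk_right x y)
    ((h2.2.2 y).preconnected ⟨x, hxy.ne⟩ ⟨z, hzy⟩)
  have hzy := reachable_deleteEdges_of_reachable_induce (Sym2.mem_mk_left x y)
    ((h2.2.2 x).preconnected ⟨z, hzx⟩ ⟨y, hxy.ne'⟩)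
  exact hxz.trans hzy

theorem TwoConnected.exists_isCycle_mem_edges_mem_support_s17 (h2 : TwoConnected G) {x y : V}
    (hxy : G.Adj x y) (u : V) :
    ∃ (a : V) (c : G.Walk a a), c.IsCycle ∧ s(x, y) ∈ c.edges ∧ u ∈ c.support := by
  have through_start {x y : V} (hxy : G.Adj x y) :
      ∃ (a : V) (c : G.Walk a a), c.IsCycle ∧ s(x, y) ∈ c.edges ∧ x ∈ c.support :=
    let ⟨a, c, hc, hxyc⟩ := h2.exists_isCycle_mem_edges_s17 hxy
    ⟨a, c, hc, hxyc, c.fst_mem_support_of_mem_edges hxyc⟩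
  obtain ⟨w⟩ := h2.1.preconnected x u
  -- Along a walk `x x' … u`: a circuit through `x'x` and `u` passes through `x`, and the ear
  -- argument reroutes it through `xy`.
  induction w generalizing y with
  | nil => exact through_start hxy
  | @cons x x' u hxx' w ih =>
    obtain rfl | hux := eq_or_ne u x
    · exact through_start hxy
    obtain ⟨a, c, hc, hxc, huc⟩ := ih hxx'.symm
    by_cases hxyc : s(x, y) ∈ c.edges
    · exact ⟨a, c, hc, hxyc, huc⟩
    exact exists_isCycle_mem_edges_mem_support_of_isCycle (h2.2.2 x) hc
      (c.snd_mem_support_of_mem_edges hxc) huc hux hxy hxyc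

theorem TwoConnected.reachable_deleteEdges_or_of_mem [DecidablePred (· ∈ A)]
    (h2 : TwoConnected G)
    (hA : ∀ (a : V) (c : G.Walk a a), c.IsCycle →
      c.edges.countP (· ∈ A) = 0 ∨ c.edges.countP (· ∈ A) = 2)
    {p q : V} (hpq : G.Adj p q) (hpqA : s(p, q) ∈ A) (u : V) :
    (G.deleteEdges A).Reachable p u ∨ (G.deleteEdges A).Reachable q u := by
  have hsep := not_reachable_deleteEdges_of_mem (fun a c hc => by have := hA a c hc; omega)
    hpq hpqA
  obtain ⟨a, c, hc, hpqc, huc⟩ := h2.exists_isCycle_mem_edges_mem_support_s17 hpq u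
  obtain ⟨d, hd⟩ := c.exists_reachable_deleteEdges_of_countP_le_two (A := A)
    (by have := hA a c hc; omega)
  have hp := hd p (c.fst_mem_support_of_mem_edges hpqc)
  have hq := hd q (c.snd_mem_support_of_mem_edges hpqc)
  have hu := hd u huc
  -- `c` meets only the components of `a` and `d`, and `p`, `q` lie in different ones.
  simp only [← ConnectedComponent.eq] at hp hq hu hsep ⊢
  grind

end

theorem statement17_general {V : Type u} (G : SimpleGraph V) (h2 : TwoConnected G)
    (A : Set (Sym2 V))
    (hcirc : ∀ C : Set (Sym2 V), IsCircuit G C →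
      (C ∩ A).ncard = 0 ∨ (C ∩ A).ncard = 2)
    (hdis : ¬(G.deleteEdges A).Connected) :
    ∃ c₁ c₂ : (G.deleteEdges A).ConnectedComponent, c₁ ≠ c₂ ∧
      ∀ c : (G.deleteEdges A).ConnectedComponent, c = c₁ ∨ c = c₂ := by
  classical
  have hcyc (a : V) (c : G.Walk a a) (hc : c.IsCycle) :
      c.edges.countP (· ∈ A) = 0 ∨ c.edges.countP (· ∈ A) = 2 := by
    rw [← hc.edges_nodup.ncard_setOf_mem_inter]
    exact hcirc _ ⟨a, c, hc, rfl⟩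
  obtain ⟨p, q, hpq, hpqA⟩ := h2.1.exists_adj_mem_of_not_connected_deleteEdges hdis
  refine ⟨G.deleteEdges A |>.connectedComponentMk p, G.deleteEdges A |>.connectedComponentMk q,
    fun h => ?_, fun c => c.ind fun u => ?_⟩
  · exact not_reachable_deleteEdges_of_mem (fun a c hc => by have := hcyc a c hc; omega) hpq hpqA
      (ConnectedComponent.exact h)
  · simp only [ConnectedComponent.eq]
    exact (h2.reachable_deleteEdges_or_of_mem hcyc hpq hpqA u).imp .symm .symm

/-- If every circuit of a 2-connected graph `G` contains 0 or 2
edges of an independent edge set `A`, and `G − A` is disconnected, then `G − A`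
has exactly two components. -/
theorem statement17 {V : Type u} (G : SimpleGraph V) (h2 : TwoConnected G)
    (A : Set (Sym2 V)) (hA : A ⊆ G.edgeSet) (hInd : IndepEdges A)
    (hcirc : ∀ C : Set (Sym2 V), IsCircuit G C →
      (C ∩ A).ncard = 0 ∨ (C ∩ A).ncard = 2)
    (hdis : ¬(G.deleteEdges A).Connected) :
    ∃ c₁ c₂ : (G.deleteEdges A).ConnectedComponent, c₁ ≠ c₂ ∧
      ∀ c : (G.deleteEdges A).ConnectedComponent, c = c₁ ∨ c = c₂ :=
  statement17_general G h2 A hcirc hdis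
end
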